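/- arXiv:2104.10905 — 2 statements merged into one kernel-verified Lean document; each statement's English description precedes it below -/
import Mathlib

section
/- With threshold T* = √(1/q² + 2ρc) − 1/q and cycle length T = T* + X where X is exponential with rate q > 0, the cost (Var(T) + 2ρc)/(2E[T]) + E[T]/2 equals √(1/q² + 2ρc), the minimum possible value of (v + 2ρc)/(2m) + m/2 over m > 0 and v ≥ 1/q². -/
open MeasureTheory ProbabilityTheory Real Set
open scoped Nat

/-! With `s = 1/q² + 2ρc`, an exponential variable of rate `q` has mean `1/q` and variance `1/q²`,
so the threshold policy has `E[T] = √s` and `Var T = 1/q²`. By AM-GM,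
`(v + 2ρc)/(2m) + m/2 ≥ s/(2m) + m/2 ≥ √s` whenever `v ≥ 1/q²`, with equality at
`(m, v) = (√s, 1/q²)`, which is the pair the threshold policy produces. -/

namespace ProbabilityTheory

variable {r : ℝ}

lemma expMeasure_eq_withDensity (r : ℝ) :
    expMeasure r =
      (volume.restrict (Ioi 0)).withDensity fun x => ENNReal.ofReal (r * exp (-(r * x))) := by
  rw [restrict_Ioi_eq_restrict_Ici, ← withDensity_indicator measurableSet_Ici, expMeasure,
    gammaMeasure]
  congr 1 with x
  by_cases hx : 0 ≤ x
  · simp [indicator_of_mem (mem_Ici.2 hx), gammaPDF_of_nonneg hx]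
  · simp [indicator_of_notMem (notMem_Ici.2 (not_le.1 hx)), gammaPDF_of_neg (not_le.1 hx)]

lemma integral_expMeasure (hr : 0 < r) (f : ℝ → ℝ) :
    ∫ x, f x ∂expMeasure r = ∫ x in Ioi 0, r * exp (-(r * x)) * f x := by
  rw [expMeasure_eq_withDensity, integral_withDensity_eq_integral_toReal_smul (by fun_prop)
    (ae_of_all _ fun _ => ENNReal.ofReal_lt_top)]
  refine setIntegral_congr_fun measurableSet_Ioi fun x _ => ?_
  rw [ENNReal.toReal_ofReal (by positivity), smul_eq_mul]

lemma integrable_expMeasure_iff (hr : 0 < r) {f : ℝ → ℝ} :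
    Integrable f (expMeasure r) ↔ IntegrableOn (fun x => r * exp (-(r * x)) * f x) (Ioi 0) := by
  rw [expMeasure_eq_withDensity, integrable_withDensity_iff_integrable_smul' (by fun_prop)
    (ae_of_all _ fun _ => ENNReal.ofReal_lt_top)]
  refine integrable_congr (ae_of_all _ fun x => ?_)
  dsimp only
  rw [ENNReal.toReal_ofReal (by positivity), smul_eq_mul]

lemma integral_pow_expMeasure (hr : 0 < r) (n : ℕ) :
    ∫ x, x ^ n ∂expMeasure r = n ! / r ^ n := by
  have hGamma := integral_rpow_mul_exp_neg_mul_Ioi (a := n + 1) (by positivity) hr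
  rw [add_sub_cancel_right, Gamma_nat_eq_factorial, ← Nat.cast_add_one, rpow_natCast] at hGamma
  simp_rw [rpow_natCast] at hGamma
  rw [integral_expMeasure hr]
  calc ∫ x in Ioi 0, r * exp (-(r * x)) * x ^ n
      = r * ∫ x in Ioi 0, x ^ n * exp (-(r * x)) := by
        rw [← integral_const_mul]; congr with x; ring
    _ = n ! / r ^ n := by
        rw [hGamma, one_div, inv_pow, pow_succ]; field_simp

lemma integrable_pow_expMeasure (hr : 0 < r) (n : ℕ) :
    Integrable (fun x => x ^ n) (expMeasure r) := by
  rw [integrable_expMeasure_iff hr]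
  refine Integrable.of_integral_ne_zero ?_
  rw [← integral_expMeasure hr, integral_pow_expMeasure hr]
  positivity

lemma integral_id_expMeasure (hr : 0 < r) : ∫ x, x ∂expMeasure r = r⁻¹ := by
  simpa using integral_pow_expMeasure hr 1

lemma variance_id_expMeasure (hr : 0 < r) : Var[id; expMeasure r] = (r ^ 2)⁻¹ := by
  have := isProbabilityMeasure_expMeasure hr
  rw [variance_eq_sub ((memLp_two_iff_integrable_sq aestronglyMeasurable_id).2
    (integrable_pow_expMeasure hr 2))]
  simp only [Pi.pow_apply, id]
  rw [integral_pow_expMeasure hr, integral_id_expMeasure hr]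
  field_simp
  norm_num

end ProbabilityTheory

lemma sqrt_le_div_two_mul_add_half {w m : ℝ} (hw : 0 ≤ w) (hm : 0 < m) :
    √w ≤ w / (2 * m) + m / 2 := by
  rw [div_add_div _ _ (by positivity) two_ne_zero, le_div_iff₀ (by positivity)]
  nlinarith [sq_nonneg (m - √w), sq_sqrt hw]

lemma div_two_mul_sqrt_add_half (w : ℝ) : w / (2 * √w) + √w / 2 = √w := by
  rcases le_or_gt w 0 with hw | hw
  · simp [sqrt_eq_zero'.2 hw]
  · have := sqrt_pos.2 hw
    field_simp
    rw [sq_sqrt hw.le]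
    ring

lemma isLeast_div_two_mul_add_half {v₀ a : ℝ} (h : 0 < v₀ + a) :
    IsLeast {z | ∃ m v, 0 < m ∧ v₀ ≤ v ∧ z = (v + a) / (2 * m) + m / 2} √(v₀ + a) := by
  refine ⟨⟨√(v₀ + a), v₀, sqrt_pos.2 h, le_rfl, (div_two_mul_sqrt_add_half _).symm⟩, ?_⟩
  rintro _ ⟨m, v, hm, hv, rfl⟩
  exact (sqrt_le_sqrt (by linarith)).trans (sqrt_le_div_two_mul_add_half (by linarith) hm)

theorem stmt3 {Ω : Type*} [MeasureSpace Ω] [IsProbabilityMeasure (ℙ : Measure Ω)]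
    (q ρc : ℝ) (hq : 0 < q) (hρc : 0 ≤ ρc)
    (X : Ω → ℝ) (hXm : Measurable X) (hX : Measure.map X ℙ = expMeasure q)
    (T : Ω → ℝ) (hT : T = fun ω => (Real.sqrt (1 / q ^ 2 + 2 * ρc) - 1 / q) + X ω)
    (F : ℝ → ℝ → ℝ) (hF : ∀ m v, F m v = (v + 2 * ρc) / (2 * m) + m / 2) :
    (variance T ℙ + 2 * ρc) / (2 * ∫ ω, T ω ∂ℙ) + (∫ ω, T ω ∂ℙ) / 2
        = Real.sqrt (1 / q ^ 2 + 2 * ρc) ∧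
      IsLeast {z : ℝ | ∃ m v, 0 < m ∧ 1 / q ^ 2 ≤ v ∧ z = F m v}
        (Real.sqrt (1 / q ^ 2 + 2 * ρc)) := by
  have hXlaw : HasLaw X (expMeasure q) ℙ := ⟨hXm.aemeasurable, hX⟩
  have hEX : ∫ ω, X ω ∂ℙ = 1 / q := by
    rw [hXlaw.integral_eq, integral_id_expMeasure hq, one_div]
  have hVar : variance T ℙ = 1 / q ^ 2 := by
    rw [hT, variance_const_add hXm.aestronglyMeasurable, hXlaw.variance_eq,
      variance_id_expMeasure hq, one_div]
  have hET : ∫ ω, T ω ∂ℙ = √(1 / q ^ 2 + 2 * ρc) := by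
    have hXint : Integrable X ℙ := .of_integral_ne_zero (by rw [hEX]; positivity)
    rw [hT, integral_add (integrable_const _) hXint, integral_const, hEX]
    simp
  obtain rfl : F = fun m v => (v + 2 * ρc) / (2 * m) + m / 2 := funext₂ hF
  refine ⟨?_, isLeast_div_two_mul_add_half (by positivity)⟩
  rw [hVar, hET, div_two_mul_sqrt_add_half]
end

section
/- Let T be a nonnegative random variable with mean μ̂ = E[T], such that P(|T − μ̂| > y) ≥ e^{−2qy} for 0 ≤ y ≤ μ̂ and P(|T − μ̂| > y) ≥ e^{−q(μ̂ + y)} for y > μ̂, where q > 0. Then Var(T) ≥ 1/(2q²). -/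
/-!
For `y > μ̂` the second bound dominates `e^{-2qy}`, so `P(|T - μ̂| > y) ≥ e^{-2qy}` for all
`y ≥ 0`. By the layer-cake formula,
`Var T = ∫₀^∞ P((T - μ̂)² > t) dt ≥ ∫₀^∞ e^{-2q√t} dt = 1 / (2q²)`,
the last integral being a Gamma integral.
-/

open MeasureTheory ProbabilityTheory Set Real

lemma integrableOn_exp_neg_mul_sqrt {c : ℝ} (hc : 0 < c) :
    IntegrableOn (fun t : ℝ ↦ exp (-(c * √t))) (Ioi 0) := by
  refine (integrableOn_rpow_mul_exp_neg_mul_rpow (s := 0) (p := 1 / 2) (by norm_num)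
    (by norm_num) hc).congr_fun (fun t _ ↦ ?_) measurableSet_Ioi
  simp [sqrt_eq_rpow]

lemma integral_exp_neg_mul_sqrt {c : ℝ} (hc : 0 < c) :
    ∫ t in Ioi 0, exp (-(c * √t)) = 2 / c ^ 2 := by
  have := integral_exp_neg_mul_rpow (p := 1 / 2) (by norm_num) hc
  simp only [neg_mul, ← sqrt_eq_rpow] at this
  rw [this, show (1 : ℝ) / (1 / 2) + 1 = 2 + 1 by norm_num, Gamma_add_one two_ne_zero,
    Gamma_two, show (-1 : ℝ) / (1 / 2) = (-2 : ℤ) by norm_num, rpow_intCast]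
  field_simp

lemma MeasureTheory.Integrable.integrableOn_measureReal_lt {α : Type*} [MeasurableSpace α]
    {μ : Measure α} {f : α → ℝ} (hf : Integrable f μ) (hf_nn : 0 ≤ᵐ[μ] f) :
    IntegrableOn (fun t ↦ μ.real {a | t < f a}) (Ioi 0) := by
  have hmeas : Measurable fun t : ℝ ↦ μ {a | t < f a} :=
    Antitone.measurable fun _ _ hst ↦ measure_mono fun _ h ↦ hst.trans_lt h
  refine integrable_toReal_of_lintegral_ne_top hmeas.aemeasurable ?_
  rw [← lintegral_eq_lintegral_meas_lt μ hf_nn hf.aemeasurable]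
  exact hf.lintegral_lt_top.ne

namespace ProbabilityTheory

variable {Ω : Type*} [MeasurableSpace Ω] {P : Measure Ω} [IsFiniteMeasure P] {X : Ω → ℝ}

lemma variance_eq_integral_measureReal_lt_sq (hX : MemLp X 2 P) :
    variance X P = ∫ t in Ioi 0, P.real {ω | t < (X ω - P[X]) ^ 2} := by
  rw [variance_eq_integral hX.aemeasurable]
  exact (hX.sub (memLp_const _)).integrable_sq.integral_eq_integral_meas_lt
    (.of_forall fun _ ↦ sq_nonneg _)

lemma div_sq_le_variance_of_exp_le_measureReal (hX : MemLp X 2 P) {c : ℝ} (hc : 0 < c)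
    (htail : ∀ y, 0 ≤ y → exp (-(c * y)) ≤ P.real {ω | y < |X ω - P[X]|}) :
    2 / c ^ 2 ≤ variance X P := by
  have htail_sq (t : ℝ) (ht : t ∈ Ioi 0) :
      exp (-(c * √t)) ≤ P.real {ω | t < (X ω - P[X]) ^ 2} := by
    simpa only [sqrt_lt (le_of_lt ht) (abs_nonneg _), sq_abs] using htail √t (sqrt_nonneg t)
  have hsq_int : IntegrableOn (fun t ↦ P.real {ω | t < (X ω - P[X]) ^ 2}) (Ioi 0) :=
    (hX.sub (memLp_const _)).integrable_sq.integrableOn_measureReal_lt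
      (.of_forall fun _ ↦ sq_nonneg _)
  calc 2 / c ^ 2 = ∫ t in Ioi 0, exp (-(c * √t)) := (integral_exp_neg_mul_sqrt hc).symm
    _ ≤ ∫ t in Ioi 0, P.real {ω | t < (X ω - P[X]) ^ 2} :=
      setIntegral_mono_on (integrableOn_exp_neg_mul_sqrt hc) hsq_int measurableSet_Ioi htail_sq
    _ = variance X P := (variance_eq_integral_measureReal_lt_sq hX).symm

end ProbabilityTheory

theorem stmt6_general {Ω : Type*} [MeasureSpace Ω] [IsProbabilityMeasure (ℙ : Measure Ω)]
    (q : ℝ) (hq : 0 < q) (T : Ω → ℝ) (hT2 : MemLp T 2 ℙ)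
    (μ : ℝ) (hμ : μ = ∫ ω, T ω ∂ℙ)
    (h1 : ∀ y : ℝ, 0 ≤ y → y ≤ μ →
      Real.exp (-(2 * q * y)) ≤ (ℙ {ω | |T ω - μ| > y}).toReal)
    (h2 : ∀ y : ℝ, μ < y →
      Real.exp (-(q * (μ + y))) ≤ (ℙ {ω | |T ω - μ| > y}).toReal) :
    1 / (2 * q ^ 2) ≤ variance T ℙ := by
  have htail :
      ∀ y, 0 ≤ y → exp (-(2 * q * y)) ≤ (ℙ : Measure Ω).real {ω | y < |T ω - ℙ[T]|} := by
    intro y hy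
    rw [← hμ]
    rcases le_or_gt y μ with hyμ | hμy
    · exact h1 y hy hyμ
    · exact (exp_le_exp.2 (by nlinarith)).trans (h2 y hμy)
  calc 1 / (2 * q ^ 2) = 2 / (2 * q) ^ 2 := by field_simp
    _ ≤ variance T ℙ := div_sq_le_variance_of_exp_le_measureReal hT2 (by positivity) htail

theorem stmt6 {Ω : Type*} [MeasureSpace Ω] [IsProbabilityMeasure (ℙ : Measure Ω)]
    (q : ℝ) (hq : 0 < q) (T : Ω → ℝ) (hT0 : ∀ ω, 0 ≤ T ω) (hT2 : MemLp T 2 ℙ)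
    (μ : ℝ) (hμ : μ = ∫ ω, T ω ∂ℙ)
    (h1 : ∀ y : ℝ, 0 ≤ y → y ≤ μ →
      Real.exp (-(2 * q * y)) ≤ (ℙ {ω | |T ω - μ| > y}).toReal)
    (h2 : ∀ y : ℝ, μ < y →
      Real.exp (-(q * (μ + y))) ≤ (ℙ {ω | |T ω - μ| > y}).toReal) :
    1 / (2 * q ^ 2) ≤ variance T ℙ :=
  stmt6_general q hq T hT2 μ hμ h1 h2
end
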